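/- arXiv:math/0309139 — 7 statements merged into one kernel-verified Lean document; each statement's English description precedes it below -/
import Mathlib

section
/- Let α ≠ 0 be real, β ∈ {1, −1}, and let u : ℝ × ℝ → ℝ be sufficiently smooth and satisfy u_t = ∂x(e^u u_x) + β e^{αu} at every point. Then for every real ε, the function v(t,x) := u(e^{−2αε} t, e^{−(α−1)ε} x) − 2ε also satisfies v_t = ∂x(e^v v_x) + β e^{αv} at every point. (This is the finite transformation generated by the symmetry X₃ = 2αt ∂t + (α−1)x ∂x − 2 ∂u.) -/
noncomputable section

/-- Partial derivative with respect to the first variable (time). -/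
def pdT (f : ℝ × ℝ → ℝ) (t x : ℝ) : ℝ := deriv (fun s => f (s, x)) t

/-- Partial derivative with respect to the second variable (space). -/
def pdX (f : ℝ × ℝ → ℝ) (t x : ℝ) : ℝ := deriv (fun y => f (t, y)) x

/-- the finite transformation generated by
`X₃ = 2αt ∂t + (α−1)x ∂x − 2 ∂u` maps solutions of
`u_t = ∂x(e^u u_x) + β e^{αu}` to solutions. -/
theorem symmetry_exponential_source
    (α : ℝ) (hα : α ≠ 0) (β : ℝ) (hβ : β = 1 ∨ β = -1)
    (u : ℝ × ℝ → ℝ) (hu : ContDiff ℝ 2 u)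
    (heq : ∀ t x : ℝ,
      pdT u t x = deriv (fun y => Real.exp (u (t, y)) * pdX u t y) x +
        β * Real.exp (α * u (t, x))) :
    ∀ ε : ℝ, ∀ t x : ℝ,
      pdT (fun p => u (Real.exp (-2 * α * ε) * p.1,
          Real.exp (-(α - 1) * ε) * p.2) - 2 * ε) t x =
        deriv (fun y =>
          Real.exp ((fun p => u (Real.exp (-2 * α * ε) * p.1,
              Real.exp (-(α - 1) * ε) * p.2) - 2 * ε) (t, y)) *
            pdX (fun p => u (Real.exp (-2 * α * ε) * p.1,
              Real.exp (-(α - 1) * ε) * p.2) - 2 * ε) t y) x +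
        β * Real.exp (α * ((fun p => u (Real.exp (-2 * α * ε) * p.1,
            Real.exp (-(α - 1) * ε) * p.2) - 2 * ε) (t, x))) := by
  intro ε t x
  set A : ℝ := Real.exp (-2 * α * ε) with hAdef
  set B : ℝ := Real.exp (-(α - 1) * ε) with hBdef
  -- slices of u are C²
  have hsliceX : ∀ s : ℝ, ContDiff ℝ 2 (fun y => u (s, y)) :=
    fun s => hu.comp (contDiff_const.prodMk contDiff_id)
  have hsliceT : ∀ y : ℝ, ContDiff ℝ 2 (fun s => u (s, y)) :=
    fun y => hu.comp (contDiff_id.prodMk contDiff_const)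
  -- differentiability of the spatial partial derivative
  have hdX : ∀ s : ℝ, Differentiable ℝ (fun y => pdX u s y) := by
    intro s
    have h2 : ContDiff ℝ ((1:ℕ) + 1) (fun y => u (s, y)) := by exact_mod_cast hsliceX s
    exact (contDiff_succ_iff_deriv.mp h2).2.2.differentiable (by norm_num)
  -- basic derivative facts
  have hTdiff : ∀ (s y : ℝ), HasDerivAt (fun s' => u (s', y)) (pdT u s y) s := by
    intro s y
    exact (((hsliceT y).differentiable (by norm_num)) s).hasDerivAt
  have hXdiff : ∀ (s y : ℝ), HasDerivAt (fun y' => u (s, y')) (pdX u s y) y := by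
    intro s y
    exact (((hsliceX s).differentiable (by norm_num)) y).hasDerivAt
  -- time derivative of v
  have hmulA : ∀ s : ℝ, HasDerivAt (fun s' : ℝ => A * s') A s := by
    intro s
    simpa using (hasDerivAt_id s).const_mul A
  have hmulB : ∀ y : ℝ, HasDerivAt (fun y' : ℝ => B * y') B y := by
    intro y
    simpa using (hasDerivAt_id y).const_mul B
  have hT : pdT (fun p => u (A * p.1, B * p.2) - 2 * ε) t x
      = A * pdT u (A * t) (B * x) := by
    have h1 : HasDerivAt (fun s => u (A * s, B * x) - 2 * ε)
        (pdT u (A * t) (B * x) * A) t := by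
      have := ((hTdiff (A * t) (B * x)).comp t (hmulA t))
      exact this.sub_const _
    have := h1.deriv
    simpa [pdT, mul_comm] using this
  -- spatial derivative of v
  have hX : ∀ y : ℝ, pdX (fun p => u (A * p.1, B * p.2) - 2 * ε) t y
      = B * pdX u (A * t) (B * y) := by
    intro y
    have h1 : HasDerivAt (fun y' => u (A * t, B * y') - 2 * ε)
        (pdX u (A * t) (B * y) * B) y := by
      have := ((hXdiff (A * t) (B * y)).comp y (hmulB y))
      exact this.sub_const _
    have := h1.deriv
    simpa [pdX, mul_comm] using this
  -- the flux function G
  set G : ℝ → ℝ := fun z => Real.exp (u (A * t, z)) * pdX u (A * t) z with hGdef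
  have hGdiff : Differentiable ℝ G := by
    exact (Real.differentiable_exp.comp ((hsliceX (A * t)).differentiable (by norm_num))).mul
      (hdX (A * t))
  -- derivative of the transformed flux
  have hflux : deriv (fun y =>
      Real.exp (u (A * t, B * y) - 2 * ε)
        * pdX (fun p => u (A * p.1, B * p.2) - 2 * ε) t y) x
      = Real.exp (-2 * ε) * B * (deriv G (B * x) * B) := by
    have hEq : (fun y =>
        Real.exp (u (A * t, B * y) - 2 * ε)
          * pdX (fun p => u (A * p.1, B * p.2) - 2 * ε) t y)
        = fun y => Real.exp (-2 * ε) * B * G (B * y) := by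
      funext y
      rw [hX y, hGdef, Real.exp_sub]
      have : Real.exp (2 * ε) ≠ 0 := Real.exp_ne_zero _
      rw [show (-2 : ℝ) * ε = -(2 * ε) by ring, Real.exp_neg]
      field_simp
    rw [hEq]
    have h1 : HasDerivAt (fun y => G (B * y)) (deriv G (B * x) * B) x :=
      ((hGdiff (B * x)).hasDerivAt).comp x (hmulB x)
    have h2 := (h1.const_mul (Real.exp (-2 * ε) * B)).deriv
    simpa [mul_assoc] using h2
  -- the PDE at the transformed point
  have hpde := heq (A * t) (B * x)
  have hGpde : pdT u (A * t) (B * x)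
      = deriv G (B * x) + β * Real.exp (α * u (A * t, B * x)) := by
    simpa [hGdef, pdX] using hpde
  -- exponent identities
  have hA : A = Real.exp (-2 * ε) * B * B := by
    rw [hAdef, hBdef, ← Real.exp_add, ← Real.exp_add]
    ring_nf
  have hE : Real.exp (α * (u (A * t, B * x) - 2 * ε))
      = Real.exp (α * u (A * t, B * x)) * A := by
    rw [hAdef, ← Real.exp_add]
    congr 1
    ring
  -- conclude
  simp only
  rw [hT, hflux, hE, hGpde]
  rw [hA]
  ring
end
end

section
/- Fix ε ∈ ℝ, τ > 0, and reals x, h⁺ > 0, h⁻ > 0 with 1 − εx > 0, 1 − ε(x+h⁺) > 0, and 1 − ε(x−h⁻) > 0, and positive reals u, u₊, u₋, û. Suppose the explicit difference scheme (û − u)/τ = −((h⁺ + h⁻)/(6 h⁺ h⁻))·[(u₊^{−1/3} − u^{−1/3})/h⁺ − (u^{−1/3} − u₋^{−1/3})/h⁻] holds. Define the transformed mesh points x̄ = x/(1−εx), x̄₊ = (x+h⁺)/(1−ε(x+h⁺)), x̄₋ = (x−h⁻)/(1−ε(x−h⁻)), the transformed steps h̄⁺ = x̄₊ − x̄, h̄⁻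 = x̄ − x̄₋, and the transformed values ū = u(1−εx)³, ū₊ = u₊(1−ε(x+h⁺))³, ū₋ = u₋(1−ε(x−h⁻))³, ū̂ = û(1−εx)³. Then the same scheme holds for the transformed quantities: (ū̂ − ū)/τ = −((h̄⁺ + h̄⁻)/(6 h̄⁺ h̄⁻))·[(ū₊^{−1/3} − ū^{−1/3})/h̄⁺ − (ū^{−1/3} − ū₋^{−1/3})/h̄⁻]. -/
noncomputable section

lemma cube_rpow_aux (y z : ℝ) (hy : 0 < y) (hz : 0 < z) :
    (y * z ^ 3) ^ (-(1 / 3) : ℝ) = y ^ (-(1 / 3) : ℝ) * z⁻¹ := by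
  have h3 : (z : ℝ) ^ 3 = z ^ ((3 : ℕ) : ℝ) := by
    rw [Real.rpow_natCast]
  rw [Real.mul_rpow hy.le (by positivity), h3, ← Real.rpow_mul hz.le]
  norm_num
  rw [Real.rpow_neg_one]
  exact Or.inl rfl

/-- invariance of the explicit scheme for `u_t = ∂x(u^{−4/3}u_x)`
under the finite projective transformation `x̄ = x/(1−εx)`, `ū = u(1−εx)³`. -/
theorem scheme_invariance_projective
    (ε τ x hp hm u up um uh : ℝ)
    (hτ : 0 < τ) (hhp : 0 < hp) (hhm : 0 < hm)
    (h1 : 0 < 1 - ε * x) (h2 : 0 < 1 - ε * (x + hp)) (h3 : 0 < 1 - ε * (x - hm))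
    (hu : 0 < u) (hup : 0 < up) (hum : 0 < um) (huh : 0 < uh)
    (hscheme : (uh - u) / τ =
      -((hp + hm) / (6 * hp * hm)) *
        ((up ^ (-(1 / 3) : ℝ) - u ^ (-(1 / 3) : ℝ)) / hp -
         (u ^ (-(1 / 3) : ℝ) - um ^ (-(1 / 3) : ℝ)) / hm)) :
    let xb := x / (1 - ε * x)
    let xbp := (x + hp) / (1 - ε * (x + hp))
    let xbm := (x - hm) / (1 - ε * (x - hm))
    let hbp := xbp - xb
    let hbm := xb - xbm
    let ub := u * (1 - ε * x) ^ 3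
    let ubp := up * (1 - ε * (x + hp)) ^ 3
    let ubm := um * (1 - ε * (x - hm)) ^ 3
    let uhb := uh * (1 - ε * x) ^ 3
    (uhb - ub) / τ =
      -((hbp + hbm) / (6 * hbp * hbm)) *
        ((ubp ^ (-(1 / 3) : ℝ) - ub ^ (-(1 / 3) : ℝ)) / hbp -
         (ub ^ (-(1 / 3) : ℝ) - ubm ^ (-(1 / 3) : ℝ)) / hbm) := by
  intro xb xbp xbm hbp hbm ub ubp ubm uhb
  set A := 1 - ε * x with hA
  set B := 1 - ε * (x + hp) with hB
  set C := 1 - ε * (x - hm) with hC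
  have hAne : A ≠ 0 := ne_of_gt h1
  have hBne : B ≠ 0 := ne_of_gt h2
  have hCne : C ≠ 0 := ne_of_gt h3
  have hhbp : hbp = hp / (A * B) := by
    show (x + hp) / B - x / A = hp / (A * B)
    field_simp
    ring
  have hhbm : hbm = hm / (A * C) := by
    show x / A - (x - hm) / C = hm / (A * C)
    field_simp
    ring
  have hub : ub ^ (-(1 / 3) : ℝ) = u ^ (-(1 / 3) : ℝ) * A⁻¹ := cube_rpow_aux u A hu h1
  have hubp : ubp ^ (-(1 / 3) : ℝ) = up ^ (-(1 / 3) : ℝ) * B⁻¹ := cube_rpow_aux up B hup h2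
  have hubm : ubm ^ (-(1 / 3) : ℝ) = um ^ (-(1 / 3) : ℝ) * C⁻¹ := cube_rpow_aux um C hum h3
  have hval : uh - u = τ * (-((hp + hm) / (6 * hp * hm)) *
        ((up ^ (-(1 / 3) : ℝ) - u ^ (-(1 / 3) : ℝ)) / hp -
         (u ^ (-(1 / 3) : ℝ) - um ^ (-(1 / 3) : ℝ)) / hm)) := by
    rw [← hscheme]; field_simp
  show (uhb - ub) / τ = _
  have huhb : uhb - ub = (uh - u) * A ^ 3 := by show uh * A ^ 3 - u * A ^ 3 = _; ring
  rw [huhb, hval, hub, hubp, hubm, hhbp, hhbm]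
  set v := u ^ (-(1 / 3) : ℝ)
  set vp := up ^ (-(1 / 3) : ℝ)
  set vm := um ^ (-(1 / 3) : ℝ)
  field_simp
  ring
end
end

section
/- Let u : ℝ × ℝ → ℝ be sufficiently smooth, positive, and satisfy u_t = ∂x(u^{−4/3} u_x) at every point. Then for every real ε, the function v(t,x) := (1+εx)^{−3} · u(t, x/(1+εx)), defined on the set {(t,x) : 1+εx > 0}, is positive and satisfies v_t = ∂x(v^{−4/3} v_x) at every point of that set. (This is the finite transformation generated by the projective symmetry X₅ = x² ∂x − 3xu ∂u admitted in the special case K = u^{−4/3}.) -/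
/-! Write `c = 1 + εx` and `z = x / c`, so that `z' = c⁻²` and `v(t, x) = c⁻³ u(t, z)`.
The flux of `v` is `v^{-4/3} v_x = -3ε u(t, z)^{-1/3} + c⁻¹ (u^{-4/3} u_x)(t, z)`.
Differentiating in `x`, the first term contributes `ε c⁻² (u^{-4/3} u_x)(t, z)`, which cancels
the derivative of the factor `c⁻¹` in the second; what remains is
`c⁻³ ∂ₓ(u^{-4/3} u_x)(t, z) = c⁻³ u_t(t, z) = v_t`. -/

noncomputable section

open Real Topology

def powerFlux (w : ℝ → ℝ) (y : ℝ) : ℝ := w y ^ (-(4 / 3) : ℝ) * deriv w y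

def projectiveTransform (ε : ℝ) (w : ℝ → ℝ) (y : ℝ) : ℝ :=
  ((1 + ε * y) ^ 3)⁻¹ * w (y / (1 + ε * y))

theorem differentiable_powerFlux {w : ℝ → ℝ} (hw : ContDiff ℝ 2 w) (hpos : ∀ y, 0 < w y) :
    Differentiable ℝ (powerFlux w) := by
  have hw' : Differentiable ℝ (deriv w) :=
    (hw.iterate_deriv' 1 1).differentiable one_ne_zero
  exact fun y => ((hw.differentiable two_ne_zero y).rpow_const (Or.inl (hpos y).ne')).mul (hw' y)

theorem hasDerivAt_div_one_add_mul {ε x : ℝ} (hc : 1 + ε * x ≠ 0) :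
    HasDerivAt (fun y => y / (1 + ε * y)) ((1 + ε * x) ^ 2)⁻¹ x := by
  refine ((hasDerivAt_id' x).div (((hasDerivAt_id' x).const_mul ε).const_add 1) hc).congr_deriv ?_
  field_simp
  ring

theorem hasDerivAt_projectiveTransform {ε x : ℝ} {w : ℝ → ℝ}
    (hw : DifferentiableAt ℝ w (x / (1 + ε * x))) (hc : 1 + ε * x ≠ 0) :
    HasDerivAt (projectiveTransform ε w)
      (-3 * ε * ((1 + ε * x) ^ 4)⁻¹ * w (x / (1 + ε * x))
        + ((1 + ε * x) ^ 5)⁻¹ * deriv w (x / (1 + ε * x))) x := by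
  have hcube := ((((hasDerivAt_id' x).const_mul ε).const_add 1).fun_pow 3).fun_inv
    (pow_ne_zero 3 hc)
  have hcomp : HasDerivAt (fun y => w (y / (1 + ε * y))) _ x :=
    hw.hasDerivAt.comp x (hasDerivAt_div_one_add_mul hc)
  refine (hcube.mul hcomp).congr_deriv ?_
  field_simp
  ring

theorem inv_pow_three_mul_rpow_neg_four_div_three {c U : ℝ} (hc : 0 < c) (hU : 0 ≤ U) :
    ((c ^ 3)⁻¹ * U) ^ (-(4 / 3) : ℝ) = c ^ 4 * U ^ (-(4 / 3) : ℝ) := by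
  rw [mul_rpow (by positivity) hU, ← rpow_natCast c 3, ← rpow_neg_one, ← rpow_mul hc.le,
    ← rpow_mul hc.le, ← rpow_natCast c 4]
  norm_num

theorem powerFlux_projectiveTransform {ε x : ℝ} {w : ℝ → ℝ}
    (hw : DifferentiableAt ℝ w (x / (1 + ε * x))) (hpos : 0 < w (x / (1 + ε * x)))
    (hc : 0 < 1 + ε * x) :
    powerFlux (projectiveTransform ε w) x
      = -3 * ε * w (x / (1 + ε * x)) ^ (-(1 / 3) : ℝ)
        + (1 + ε * x)⁻¹ * powerFlux w (x / (1 + ε * x)) := by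
  have hU : w (x / (1 + ε * x)) ^ (-(1 / 3) : ℝ)
      = w (x / (1 + ε * x)) ^ (-(4 / 3) : ℝ) * w (x / (1 + ε * x)) := by
    rw [← rpow_add_one hpos.ne']
    norm_num
  rw [powerFlux, powerFlux, (hasDerivAt_projectiveTransform hw hc.ne').deriv, projectiveTransform,
    inv_pow_three_mul_rpow_neg_four_div_three hc hpos.le, hU]
  field_simp

theorem hasDerivAt_powerFlux_projectiveTransform {ε x F' : ℝ} {w : ℝ → ℝ}
    (hw : Differentiable ℝ w) (hpos : ∀ y, 0 < w y) (hc : 0 < 1 + ε * x)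
    (hF : HasDerivAt (powerFlux w) F' (x / (1 + ε * x))) :
    HasDerivAt (powerFlux (projectiveTransform ε w)) (((1 + ε * x) ^ 3)⁻¹ * F') x := by
  have hflux : (fun y => -3 * ε * w (y / (1 + ε * y)) ^ (-(1 / 3) : ℝ)
      + (1 + ε * y)⁻¹ * powerFlux w (y / (1 + ε * y))) =ᶠ[𝓝 x]
      powerFlux (projectiveTransform ε w) := by
    have hopen : IsOpen {y : ℝ | 0 < 1 + ε * y} := isOpen_lt continuous_const (by fun_prop)
    filter_upwards [hopen.mem_nhds hc] with y hy
    exact (powerFlux_projectiveTransform (hw _) (hpos _) hy).symm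
  have hz := hasDerivAt_div_one_add_mul hc.ne'
  have hwz : HasDerivAt (fun y => w (y / (1 + ε * y))) _ x := (hw _).hasDerivAt.comp x hz
  have hFz : HasDerivAt (fun y => powerFlux w (y / (1 + ε * y))) (F' * ((1 + ε * x) ^ 2)⁻¹) x :=
    HasDerivAt.comp (h₂ := powerFlux w) x hF hz
  have hinv := (((hasDerivAt_id' x).const_mul ε).const_add 1).fun_inv hc.ne'
  refine ((((hwz.rpow_const (Or.inl (hpos _).ne')).const_mul (-3 * ε)).add
    (hinv.mul hFz)).congr_of_eventuallyEq hflux.symm).congr_deriv ?_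
  have hexp : (-(1 / 3) : ℝ) - 1 = -(4 / 3) := by norm_num
  rw [hexp, powerFlux]
  field_simp
  ring

/-- the finite projective transformation generated by
`X₅ = x² ∂x − 3xu ∂u` maps positive solutions of `u_t = ∂x(u^{−4/3} u_x)`
to positive solutions, on the set where `1 + εx > 0`. -/
theorem projective_symmetry_special_power
    (u : ℝ × ℝ → ℝ) (hupos : ∀ p, 0 < u p) (hu : ContDiff ℝ 2 u)
    (heq : ∀ t x : ℝ,
      pdT u t x = deriv (fun y => u (t, y) ^ (-(4 / 3) : ℝ) * pdX u t y) x) :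
    ∀ ε : ℝ, ∀ t x : ℝ, 1 + ε * x > 0 →
      0 < (fun p : ℝ × ℝ => ((1 + ε * p.2) ^ 3)⁻¹ * u (p.1, p.2 / (1 + ε * p.2))) (t, x) ∧
      pdT (fun p => ((1 + ε * p.2) ^ 3)⁻¹ * u (p.1, p.2 / (1 + ε * p.2))) t x =
        deriv (fun y =>
          ((fun p : ℝ × ℝ => ((1 + ε * p.2) ^ 3)⁻¹ *
              u (p.1, p.2 / (1 + ε * p.2))) (t, y)) ^ (-(4 / 3) : ℝ) *
            pdX (fun p => ((1 + ε * p.2) ^ 3)⁻¹ *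
              u (p.1, p.2 / (1 + ε * p.2))) t y) x := by
  intro ε t x hc
  refine ⟨mul_pos (inv_pos.mpr (pow_pos hc 3)) (hupos _), ?_⟩
  set w : ℝ → ℝ := fun y => u (t, y)
  have hw : ContDiff ℝ 2 w := hu.comp (contDiff_const.prodMk contDiff_id)
  have hwpos : ∀ y, 0 < w y := fun y => hupos (t, y)
  have hF : HasDerivAt (powerFlux w) (pdT u t (x / (1 + ε * x))) (x / (1 + ε * x)) := by
    rw [heq]
    exact (differentiable_powerFlux hw hwpos _).hasDerivAt
  refine (deriv_const_mul_field (((1 + ε * x) ^ 3)⁻¹ : ℝ)).trans ?_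
  -- the right-hand side unfolds to `deriv (powerFlux (projectiveTransform ε w)) x`
  exact ((hasDerivAt_powerFlux_projectiveTransform (hw.differentiable two_ne_zero) hwpos hc
    hF).deriv).symm
end
end

section
/- Let u : ℝ × ℝ → ℝ be sufficiently smooth, positive, and satisfy u_t = ∂x(u^{−4/3} u_x) + u^{−1/3} at every point. Define, for all (t,y) with |y| < √3, v(t,y) := (1 − y²/3)^{−3/2} · u(t, √3 · artanh(y/√3)). Then v is positive and satisfies v_t = ∂y(v^{−4/3} v_y) at every point (t,y) with |y| < √3. (This is the change of variables ū = u·cosh³(x/√3), x̄ = √3·tanh(x/√3), which removes the source ±u^{−1/3} with the plus sign.) -/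
/-!
With `w = 1 - y²/3 = cosh⁻²(x/√3)` and `x = √3·artanh(y/√3)` one has `dx/dy = 1/w`, and
`v = w^{-3/2} u` has flux `v^{-4/3} v_y = w^{-1/2} (y u^{-1/3} + u^{-4/3} u_x)`. Differentiating
once more, the term coming from `(w^{-1/2})'` and the one from `(u^{-1/3})' = -u^{-4/3} u_x / 3`
cancel, and since `w + y²/3 = 1` what remains is `w^{-3/2} (∂x(u^{-4/3} u_x) + u^{-1/3})`,
that is `w^{-3/2} u_t = v_t`.
-/

noncomputable section

/-- Inverse hyperbolic tangent. -/
def artanhR (x : ℝ) : ℝ := Real.log ((1 + x) / (1 - x)) / 2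

open Real

def stripWeight (y : ℝ) : ℝ := 1 - y ^ 2 / 3

def sqrtThreeArtanh (y : ℝ) : ℝ := √3 * artanhR (y / √3)

def flux (U : ℝ → ℝ) (x : ℝ) : ℝ := U x ^ (-(4 / 3) : ℝ) * deriv U x

/-- The profile `ū = u·cosh³(x/√3)` in the variable `x̄ = √3·tanh(x/√3)`. -/
def tanhTransform (U : ℝ → ℝ) (y : ℝ) : ℝ :=
  stripWeight y ^ (-(3 / 2) : ℝ) * U (sqrtThreeArtanh y)

theorem hasDerivAt_artanhR {x : ℝ} (hx : |x| < 1) :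
    HasDerivAt artanhR (1 / (1 - x ^ 2)) x := by
  obtain ⟨hx1, hx2⟩ := abs_lt.mp hx
  have hlog : HasDerivAt (fun z : ℝ => (log (1 + z) - log (1 - z)) / 2)
      ((1 / (1 + x) - -1 / (1 - x)) / 2) x := by
    have h1 : HasDerivAt (fun z : ℝ => log (1 + z)) (1 / (1 + x)) x := by
      simpa using ((hasDerivAt_id' x).const_add 1).log (by linarith)
    have h2 : HasDerivAt (fun z : ℝ => log (1 - z)) (-1 / (1 - x)) x := by
      simpa using ((hasDerivAt_id' x).const_sub 1).log (by linarith)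
    exact (h1.sub h2).div_const 2
  have hev : artanhR =ᶠ[nhds x] fun z : ℝ => (log (1 + z) - log (1 - z)) / 2 := by
    filter_upwards [Ioo_mem_nhds hx1 hx2] with z hz
    rw [artanhR, log_div (by linarith [hz.1]) (by linarith [hz.2])]
  refine (hlog.congr_of_eventuallyEq hev).congr_deriv ?_
  have h1 : 1 + x ≠ 0 := by linarith
  have h2 : 1 - x ≠ 0 := by linarith
  rw [show 1 - x ^ 2 = (1 + x) * (1 - x) by ring]
  field_simp
  ring

theorem stripWeight_pos {y : ℝ} (hy : |y| < √3) : 0 < stripWeight y := by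
  have h : |y| ^ 2 < √3 ^ 2 := pow_lt_pow_left₀ hy (abs_nonneg y) two_ne_zero
  rw [sq_abs, sq_sqrt (by norm_num)] at h
  rw [stripWeight]
  linarith

theorem hasDerivAt_stripWeight (y : ℝ) : HasDerivAt stripWeight (-(2 * y / 3)) y := by
  show HasDerivAt (fun y => 1 - y ^ 2 / 3) _ y
  simpa using ((hasDerivAt_pow 2 y).div_const 3).const_sub 1

theorem hasDerivAt_sqrtThreeArtanh {y : ℝ} (hy : |y| < √3) :
    HasDerivAt sqrtThreeArtanh (stripWeight y)⁻¹ y := by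
  have hs : (0 : ℝ) < √3 := sqrt_pos.mpr (by norm_num)
  have hx : |y / √3| < 1 := by
    rwa [abs_div, abs_of_pos hs, div_lt_one hs]
  have h := ((hasDerivAt_artanhR hx).comp y ((hasDerivAt_id' y).div_const √3)).const_mul √3
  refine HasDerivAt.congr_deriv (f := sqrtThreeArtanh) h ?_
  have hw := (stripWeight_pos hy).ne'
  rw [stripWeight] at hw
  rw [stripWeight, div_pow, sq_sqrt (by norm_num)]
  field_simp

theorem HasDerivAt.comp_sqrtThreeArtanh {f : ℝ → ℝ} {f' y : ℝ} (hy : |y| < √3)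
    (hf : HasDerivAt f f' (sqrtThreeArtanh y)) :
    HasDerivAt (fun z => f (sqrtThreeArtanh z)) (f' / stripWeight y) y := by
  rw [div_eq_mul_inv]
  exact hf.comp y (hasDerivAt_sqrtThreeArtanh hy)

theorem differentiable_flux {U : ℝ → ℝ} (hU : ContDiff ℝ 2 U) (hpos : ∀ x, 0 < U x) :
    Differentiable ℝ (flux U) := by
  have hU' : ContDiff ℝ (1 + 1) U := by exact_mod_cast hU
  have hdU : Differentiable ℝ (deriv U) :=
    (contDiff_succ_iff_deriv.mp hU').2.2.differentiable one_ne_zero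
  exact ((hU.differentiable two_ne_zero).rpow_const fun x => Or.inl (hpos x).ne').mul hdU

section Transform

variable {U : ℝ → ℝ} {y : ℝ}

theorem hasDerivAt_tanhTransform (hy : |y| < √3)
    (hU : DifferentiableAt ℝ U (sqrtThreeArtanh y)) :
    HasDerivAt (tanhTransform U)
      (stripWeight y ^ (-(5 / 2) : ℝ) *
        (y * U (sqrtThreeArtanh y) + deriv U (sqrtThreeArtanh y))) y := by
  have hw := stripWeight_pos hy
  have h : HasDerivAt (tanhTransform U) _ y :=
    ((hasDerivAt_stripWeight y).rpow_const (p := (-(3 / 2) : ℝ)) (Or.inl hw.ne')).mul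
      (hU.hasDerivAt.comp_sqrtThreeArtanh hy)
  refine h.congr_deriv ?_
  rw [show (-(5 / 2) : ℝ) = -(3 / 2) - 1 by norm_num, rpow_sub_one hw.ne']
  field_simp

theorem tanhTransform_flux_eq (hy : |y| < √3) (hU : DifferentiableAt ℝ U (sqrtThreeArtanh y))
    (hpos : 0 < U (sqrtThreeArtanh y)) :
    tanhTransform U y ^ (-(4 / 3) : ℝ) * deriv (tanhTransform U) y =
      stripWeight y ^ (-(1 / 2) : ℝ) *
        (y * U (sqrtThreeArtanh y) ^ (-(1 / 3) : ℝ) + flux U (sqrtThreeArtanh y)) := by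
  have hw := stripWeight_pos hy
  set w := stripWeight y
  set x := sqrtThreeArtanh y
  have hw' : w ^ (-(3 / 2) * -(4 / 3) : ℝ) * w ^ (-(5 / 2) : ℝ) = w ^ (-(1 / 2) : ℝ) := by
    rw [← rpow_add hw]
    norm_num
  have hu' : U x ^ (-(4 / 3) : ℝ) * U x = U x ^ (-(1 / 3) : ℝ) := by
    rw [← rpow_add_one hpos.ne']
    norm_num
  rw [(hasDerivAt_tanhTransform hy hU).deriv, tanhTransform,
    mul_rpow (rpow_nonneg hw.le _) hpos.le, ← rpow_mul hw.le, flux]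
  linear_combination (y * U x ^ (-(4 / 3) : ℝ) * U x + U x ^ (-(4 / 3) : ℝ) * deriv U x) * hw' +
    w ^ (-(1 / 2) : ℝ) * y * hu'

theorem hasDerivAt_flux_tanhTransform (hy : |y| < √3) (hU : Differentiable ℝ U)
    (hF : DifferentiableAt ℝ (flux U) (sqrtThreeArtanh y)) (hpos : ∀ x, 0 < U x) :
    HasDerivAt (fun z => tanhTransform U z ^ (-(4 / 3) : ℝ) * deriv (tanhTransform U) z)
      (stripWeight y ^ (-(3 / 2) : ℝ) *
        (deriv (flux U) (sqrtThreeArtanh y) + U (sqrtThreeArtanh y) ^ (-(1 / 3) : ℝ))) y := by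
  have hw := stripWeight_pos hy
  have hstrip : {z : ℝ | |z| < √3} ∈ nhds y :=
    (isOpen_lt continuous_abs continuous_const).mem_nhds hy
  have hev : (fun z => tanhTransform U z ^ (-(4 / 3) : ℝ) * deriv (tanhTransform U) z) =ᶠ[nhds y]
      fun z => stripWeight z ^ (-(1 / 2) : ℝ) *
        (z * U (sqrtThreeArtanh z) ^ (-(1 / 3) : ℝ) + flux U (sqrtThreeArtanh z)) := by
    filter_upwards [hstrip] with z hz
    exact tanhTransform_flux_eq hz (hU _) (hpos _)
  have hG := (hU (sqrtThreeArtanh y)).hasDerivAt.rpow_const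
    (p := (-(1 / 3) : ℝ)) (Or.inl (hpos (sqrtThreeArtanh y)).ne')
  have h : HasDerivAt (fun z => stripWeight z ^ (-(1 / 2) : ℝ) *
      (z * U (sqrtThreeArtanh z) ^ (-(1 / 3) : ℝ) + flux U (sqrtThreeArtanh z))) _ y :=
    ((hasDerivAt_stripWeight y).rpow_const (p := (-(1 / 2) : ℝ)) (Or.inl hw.ne')).mul
      (((hasDerivAt_id' y).mul (hG.comp_sqrtThreeArtanh hy)).add
        (hF.hasDerivAt.comp_sqrtThreeArtanh hy))
  refine (h.congr_deriv ?_).congr_of_eventuallyEq hev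
  have hu := hpos (sqrtThreeArtanh y)
  simp only [flux]
  rw [show (-(4 / 3) : ℝ) = -(1 / 3) - 1 by norm_num,
    show (-(3 / 2) : ℝ) = -(1 / 2) - 1 by norm_num, rpow_sub_one hw.ne', rpow_sub_one hu.ne']
  have hy2 : y ^ 2 = 3 - 3 * stripWeight y := by rw [stripWeight]; ring
  field_simp
  linear_combination U (sqrtThreeArtanh y) ^ (-(1 / 3) : ℝ) * U (sqrtThreeArtanh y) * hy2

end Transform

/-- the change of variables `ū = u·cosh³(x/√3)`,
`x̄ = √3·tanh(x/√3)` removes the source `u^{−1/3}` from the equation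
`u_t = ∂x(u^{−4/3} u_x) + u^{−1/3}`, on the strip `|y| < √3`. -/
theorem remove_source_special_power
    (u : ℝ × ℝ → ℝ) (hupos : ∀ p, 0 < u p) (hu : ContDiff ℝ 2 u)
    (heq : ∀ t x : ℝ,
      pdT u t x = deriv (fun y => u (t, y) ^ (-(4 / 3) : ℝ) * pdX u t y) x +
        u (t, x) ^ (-(1 / 3) : ℝ)) :
    ∀ t y : ℝ, |y| < Real.sqrt 3 →
      0 < (fun p : ℝ × ℝ => (1 - p.2 ^ 2 / 3) ^ (-(3 / 2) : ℝ) *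
        u (p.1, Real.sqrt 3 * artanhR (p.2 / Real.sqrt 3))) (t, y) ∧
      pdT (fun p => (1 - p.2 ^ 2 / 3) ^ (-(3 / 2) : ℝ) *
          u (p.1, Real.sqrt 3 * artanhR (p.2 / Real.sqrt 3))) t y =
        deriv (fun z =>
          ((fun p : ℝ × ℝ => (1 - p.2 ^ 2 / 3) ^ (-(3 / 2) : ℝ) *
              u (p.1, Real.sqrt 3 * artanhR (p.2 / Real.sqrt 3))) (t, z)) ^ (-(4 / 3) : ℝ) *
            pdX (fun p => (1 - p.2 ^ 2 / 3) ^ (-(3 / 2) : ℝ) *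
              u (p.1, Real.sqrt 3 * artanhR (p.2 / Real.sqrt 3))) t z) y := by
  intro t y hy
  have hU : ContDiff ℝ 2 fun x => u (t, x) := hu.comp (contDiff_const.prodMk contDiff_id)
  have hUpos : ∀ x, 0 < u (t, x) := fun x => hupos _
  refine ⟨mul_pos (rpow_pos_of_pos (stripWeight_pos hy) _) (hupos _), ?_⟩
  have hsrc : pdT u t (sqrtThreeArtanh y) =
      deriv (flux fun x => u (t, x)) (sqrtThreeArtanh y) +
        u (t, sqrtThreeArtanh y) ^ (-(1 / 3) : ℝ) := heq t _
  calc _ = stripWeight y ^ (-(3 / 2) : ℝ) * pdT u t (sqrtThreeArtanh y) :=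
        deriv_const_mul_field _
    _ = _ := congrArg _ hsrc
    _ = _ := ((hasDerivAt_flux_tanhTransform hy (hU.differentiable two_ne_zero)
        (differentiable_flux hU hUpos _) hUpos).deriv).symm
end
end

section
/- Let δ ∈ {1, −1}, t ∈ ℝ, τ > 0, h > 0, and reals u, u₊, u₋, û. Suppose the difference scheme (δ(û − u) − τ)/(e^{δτ} − 1) = (1/h)·[exp((u₊+u)/2)·(u₊−u)/h − exp((u+u₋)/2)·(u−u₋)/h] holds. Define ū = u − δt, ū₊ = u₊ − δt, ū₋ = u₋ − δt, ū̂ = û − δ(t+τ), and τ̄ = δ(e^{δ(t+τ)} − 1) − δ(e^{δt} − 1). Then τ̄ ≠ 0 and (ū̂ − ū)/τ̄ = (1/h)·[exp((ū₊+ū)/2)·(ū₊−ū)/h − exp((ū+ū₋)/2)·(ū−ū₋)/h]. That is, the discrete change of variables ū = u − δt, t̄ = δ(e^{δt} − 1) transforms the invariant scheme for u_t = (e^u u_x)_x + δ into the invariant scheme for u_t = (e^u u_x)_x. -/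
noncomputable section

/-- the discrete change of variables `ū = u − δt`,
`t̄ = δ(e^{δt} − 1)` transforms the invariant scheme for
`u_t = (e^u u_x)_x + δ` into the invariant scheme for `u_t = (e^u u_x)_x`. -/
theorem discrete_change_removes_constant_source
    (δ : ℝ) (hδ : δ = 1 ∨ δ = -1) (t τ h u up um uh : ℝ)
    (hτ : 0 < τ) (hh : 0 < h)
    (hscheme : (δ * (uh - u) - τ) / (Real.exp (δ * τ) - 1) =
      (1 / h) * (Real.exp ((up + u) / 2) * (up - u) / h -
                 Real.exp ((u + um) / 2) * (u - um) / h)) :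
    let ub := u - δ * t
    let ubp := up - δ * t
    let ubm := um - δ * t
    let uhb := uh - δ * (t + τ)
    let τb := δ * (Real.exp (δ * (t + τ)) - 1) - δ * (Real.exp (δ * t) - 1)
    τb ≠ 0 ∧
    (uhb - ub) / τb =
      (1 / h) * (Real.exp ((ubp + ub) / 2) * (ubp - ub) / h -
                 Real.exp ((ub + ubm) / 2) * (ub - ubm) / h) := by
  intro ub ubp ubm uhb τb
  have hδ0 : δ ≠ 0 := by rcases hδ with h1 | h1 <;> subst h1 <;> norm_num
  have hδ2 : δ * δ = 1 := by rcases hδ with h1 | h1 <;> subst h1 <;> norm_num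
  have hδτ : δ * τ ≠ 0 := mul_ne_zero hδ0 (ne_of_gt hτ)
  have hE : Real.exp (δ * τ) - 1 ≠ 0 := by
    intro hc
    have : Real.exp (δ * τ) = 1 := by linarith
    rw [Real.exp_eq_one_iff] at this
    exact hδτ this
  have hτb : τb = δ * Real.exp (δ * t) * (Real.exp (δ * τ) - 1) := by
    simp only [τb]
    rw [show δ * (t + τ) = δ * t + δ * τ by ring, Real.exp_add]
    ring
  have hτbne : τb ≠ 0 :=
    hτb ▸ mul_ne_zero (mul_ne_zero hδ0 (Real.exp_ne_zero _)) hE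
  refine ⟨hτbne, ?_⟩
  have key : δ * (uh - u) - τ =
      (1 / h) * (Real.exp ((up + u) / 2) * (up - u) / h -
                 Real.exp ((u + um) / 2) * (u - um) / h) *
        (Real.exp (δ * τ) - 1) := (div_eq_iff hE).mp hscheme
  have hXA : uh - δ * (t + τ) - (u - δ * t) =
      δ * ((1 / h) * (Real.exp ((up + u) / 2) * (up - u) / h -
                 Real.exp ((u + um) / 2) * (u - um) / h) *
        (Real.exp (δ * τ) - 1)) := by
    linear_combination δ * key - (uh - u) * hδ2
  simp only [uhb, ub, ubp, ubm]
  rw [hτb, hXA,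
    show (up - δ * t + (u - δ * t)) / 2 = (up + u) / 2 + -(δ * t) by ring,
    show (u - δ * t + (um - δ * t)) / 2 = (u + um) / 2 + -(δ * t) by ring,
    Real.exp_add, Real.exp_add, Real.exp_neg]
  have hne := Real.exp_ne_zero (δ * t)
  field_simp
  ring
end
end

section
/- Let δ ∈ {1, −1} and let u : ℝ × ℝ → ℝ be sufficiently smooth, positive, and satisfy the semilinear equation u_t = u_xx + δ·u·ln u at every point. Then for every real ε, the function v(t,x) := u(t, x − 2ε e^{δt}) · exp(−δε e^{δt} x + δε² e^{2δt}) is positive and also satisfies v_t = v_xx + δ·v·ln v at every point. (This is the finite transformation generated by the symmetry X₃ = 2e^{δt} ∂x − δ e^{δt} x u ∂u.) -/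
noncomputable section

/-!
Write the transformed function as `v(t, x) = u(t, x - c t) · e^φ`, `φ = k t · x + m t`, with
`c = 2ε e^{δt}`, `k = -δε e^{δt}`, `m = δε² e^{2δt}`. For any such gauge-shift one finds
`e^{-φ} (v_t - v_xx - δ v ln v)
  = (u_t - u_xx - δ u ln u) - (c' + 2k) u_x + (k' - δk) x u + (m' - k² - δm) u`,
so `v` solves the equation as soon as `(c, k, m)` solves the ODE system
`c' = -2k`, `k' = δk`, `m' = k² + δm`, which the exponentials above do.
-/

open Real

variable {f : ℝ × ℝ → ℝ}

theorem hasDerivAt_comp_prodMk_fderiv {a b : ℝ → ℝ} {a' b' s : ℝ}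
    (hf : DifferentiableAt ℝ f (a s, b s)) (ha : HasDerivAt a a' s) (hb : HasDerivAt b b' s) :
    HasDerivAt (fun s => f (a s, b s))
      (a' * fderiv ℝ f (a s, b s) (1, 0) + b' * fderiv ℝ f (a s, b s) (0, 1)) s := by
  have hsplit : ((a', b') : ℝ × ℝ) = a' • ((1 : ℝ), (0 : ℝ)) + b' • ((0 : ℝ), (1 : ℝ)) := by
    ext <;> simp
  refine (hf.hasFDerivAt.comp_hasDerivAt s (ha.prodMk hb)).congr_deriv ?_
  rw [hsplit, map_add, map_smul, map_smul, smul_eq_mul, smul_eq_mul]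

theorem pdT_eq_fderiv {t x : ℝ} (hf : DifferentiableAt ℝ f (t, x)) :
    pdT f t x = fderiv ℝ f (t, x) (1, 0) := by
  simpa [pdT] using
    (hasDerivAt_comp_prodMk_fderiv hf (hasDerivAt_id t) (hasDerivAt_const t x)).deriv

theorem pdX_eq_fderiv {t x : ℝ} (hf : DifferentiableAt ℝ f (t, x)) :
    pdX f t x = fderiv ℝ f (t, x) (0, 1) := by
  simpa [pdX] using
    (hasDerivAt_comp_prodMk_fderiv hf (hasDerivAt_const x t) (hasDerivAt_id x)).deriv

theorem hasDerivAt_comp_prodMk {a b : ℝ → ℝ} {a' b' s : ℝ}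
    (hf : DifferentiableAt ℝ f (a s, b s)) (ha : HasDerivAt a a' s) (hb : HasDerivAt b b' s) :
    HasDerivAt (fun s => f (a s, b s))
      (a' * pdT f (a s) (b s) + b' * pdX f (a s) (b s)) s := by
  rw [pdT_eq_fderiv hf, pdX_eq_fderiv hf]
  exact hasDerivAt_comp_prodMk_fderiv hf ha hb

theorem hasDerivAt_pdX {t x : ℝ} (hf : DifferentiableAt ℝ f (t, x)) :
    HasDerivAt (fun y => f (t, y)) (pdX f t x) x := by
  simpa using hasDerivAt_comp_prodMk hf (hasDerivAt_const x t) (hasDerivAt_id x)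

theorem ContDiff.differentiable_pdX (hf : ContDiff ℝ 2 f) :
    Differentiable ℝ (fun p : ℝ × ℝ => pdX f p.1 p.2) := by
  have hf1 : Differentiable ℝ f := hf.differentiable (by norm_num)
  have hpdX : (fun p : ℝ × ℝ => pdX f p.1 p.2) = fun p => fderiv ℝ f p (0, 1) :=
    funext fun p => pdX_eq_fderiv (hf1 p)
  rw [hpdX]
  exact ((hf.fderiv_right (m := 1) (by norm_num)).clm_apply contDiff_const).differentiable
    (by norm_num)

def IsLogHeatSolution (δ : ℝ) (u : ℝ × ℝ → ℝ) : Prop :=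
  ∀ t x : ℝ, pdT u t x = deriv (fun y => pdX u t y) x + δ * u (t, x) * log (u (t, x))

def gaugeShift (f : ℝ × ℝ → ℝ) (c k m : ℝ → ℝ) (p : ℝ × ℝ) : ℝ :=
  f (p.1, p.2 - c p.1) * exp (k p.1 * p.2 + m p.1)

section gaugeShift

variable {c k m : ℝ → ℝ} {t x : ℝ}

theorem hasDerivAt_gaugeShift_snd {f' : ℝ} (hf : HasDerivAt (fun y => f (t, y)) f' (x - c t)) :
    HasDerivAt (fun y => gaugeShift f c k m (t, y))
      ((f' + k t * f (t, x - c t)) * exp (k t * x + m t)) x := by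
  have hphase : HasDerivAt (fun y => k t * y + m t) (k t) x := by
    simpa using ((hasDerivAt_id x).const_mul (k t)).add_const (m t)
  refine ((hf.comp_sub_const x (c t)).fun_mul hphase.exp).congr_deriv ?_
  ring

theorem pdX_gaugeShift (hf : DifferentiableAt ℝ f (t, x - c t)) :
    pdX (gaugeShift f c k m) t x =
      (pdX f t (x - c t) + k t * f (t, x - c t)) * exp (k t * x + m t) :=
  (hasDerivAt_gaugeShift_snd (hasDerivAt_pdX hf)).deriv

theorem hasDerivAt_gaugeShift_fst {c' k' m' : ℝ} (hf : DifferentiableAt ℝ f (t, x - c t))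
    (hc : HasDerivAt c c' t) (hk : HasDerivAt k k' t) (hm : HasDerivAt m m' t) :
    HasDerivAt (fun s => gaugeShift f c k m (s, x))
      ((pdT f t (x - c t) - c' * pdX f t (x - c t) + (k' * x + m') * f (t, x - c t)) *
        exp (k t * x + m t)) t := by
  have hshift := hasDerivAt_comp_prodMk hf (hasDerivAt_id' t) (hc.const_sub x)
  refine (hshift.fun_mul ((hk.mul_const x).fun_add hm).exp).congr_deriv ?_
  ring

theorem deriv_pdX_gaugeShift (hf : ContDiff ℝ 2 f) :
    deriv (fun y => pdX (gaugeShift f c k m) t y) x =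
      (deriv (fun y => pdX f t y) (x - c t) + 2 * k t * pdX f t (x - c t) +
        k t ^ 2 * f (t, x - c t)) * exp (k t * x + m t) := by
  have hf1 : Differentiable ℝ f := hf.differentiable (by norm_num)
  have hpdX : (fun y => pdX (gaugeShift f c k m) t y) =
      fun y => gaugeShift (fun p => pdX f p.1 p.2 + k t * f p) c k m (t, y) :=
    funext fun y => pdX_gaugeShift (hf1 _)
  have hslice : HasDerivAt (fun y => pdX f t y + k t * f (t, y))
      (deriv (fun y => pdX f t y) (x - c t) + k t * pdX f t (x - c t)) (x - c t) :=
    (hasDerivAt_pdX (hf.differentiable_pdX _)).add ((hasDerivAt_pdX (hf1 _)).const_mul (k t))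
  rw [hpdX, (hasDerivAt_gaugeShift_snd hslice).deriv]
  ring

theorem isLogHeatSolution_gaugeShift {δ : ℝ} {u : ℝ × ℝ → ℝ} (hsol : IsLogHeatSolution δ u)
    (hu : ContDiff ℝ 2 u) (hu0 : ∀ p, u p ≠ 0)
    (hc : ∀ t, HasDerivAt c (-2 * k t) t) (hk : ∀ t, HasDerivAt k (δ * k t) t)
    (hm : ∀ t, HasDerivAt m (k t ^ 2 + δ * m t) t) :
    IsLogHeatSolution δ (gaugeShift u c k m) := by
  intro t x
  have hlog : log (gaugeShift u c k m (t, x)) = log (u (t, x - c t)) + (k t * x + m t) := by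
    rw [gaugeShift, log_mul (hu0 _) (exp_ne_zero _), log_exp]
  rw [pdT, (hasDerivAt_gaugeShift_fst (hu.differentiable (by norm_num) _)
    (hc t) (hk t) (hm t)).deriv, deriv_pdX_gaugeShift hu, hlog, hsol, gaugeShift]
  ring

end gaugeShift

theorem hasDerivAt_const_mul_exp_mul (a b t : ℝ) :
    HasDerivAt (fun s => b * exp (a * s)) (a * (b * exp (a * t))) t := by
  refine (((hasDerivAt_id' t).const_mul a).exp.const_mul b).congr_deriv ?_
  ring

theorem symmetry_X3_log_source_general
    (δ : ℝ)
    (u : ℝ × ℝ → ℝ) (hupos : ∀ p, 0 < u p) (hu : ContDiff ℝ 2 u)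
    (heq : ∀ t x : ℝ,
      pdT u t x = deriv (fun y => pdX u t y) x +
        δ * u (t, x) * Real.log (u (t, x))) :
    ∀ ε : ℝ,
      (∀ p : ℝ × ℝ, 0 < u (p.1, p.2 - 2 * ε * Real.exp (δ * p.1)) *
        Real.exp (-δ * ε * Real.exp (δ * p.1) * p.2 +
          δ * ε ^ 2 * Real.exp (2 * δ * p.1))) ∧
      (∀ t x : ℝ,
        pdT (fun p => u (p.1, p.2 - 2 * ε * Real.exp (δ * p.1)) *
            Real.exp (-δ * ε * Real.exp (δ * p.1) * p.2 +
              δ * ε ^ 2 * Real.exp (2 * δ * p.1))) t x =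
          deriv (fun y =>
            pdX (fun p => u (p.1, p.2 - 2 * ε * Real.exp (δ * p.1)) *
              Real.exp (-δ * ε * Real.exp (δ * p.1) * p.2 +
                δ * ε ^ 2 * Real.exp (2 * δ * p.1))) t y) x +
          δ * ((fun p : ℝ × ℝ => u (p.1, p.2 - 2 * ε * Real.exp (δ * p.1)) *
              Real.exp (-δ * ε * Real.exp (δ * p.1) * p.2 +
                δ * ε ^ 2 * Real.exp (2 * δ * p.1))) (t, x)) *
            Real.log ((fun p : ℝ × ℝ => u (p.1, p.2 - 2 * ε * Real.exp (δ * p.1)) *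
              Real.exp (-δ * ε * Real.exp (δ * p.1) * p.2 +
                δ * ε ^ 2 * Real.exp (2 * δ * p.1))) (t, x))) := by
  intro ε
  refine ⟨fun p => mul_pos (hupos _) (exp_pos _), ?_⟩
  have hc : ∀ t, HasDerivAt (fun s => 2 * ε * exp (δ * s)) (-2 * (-δ * ε * exp (δ * t))) t :=
    fun t => (hasDerivAt_const_mul_exp_mul δ (2 * ε) t).congr_deriv (by ring)
  have hk : ∀ t, HasDerivAt (fun s => -δ * ε * exp (δ * s)) (δ * (-δ * ε * exp (δ * t))) t :=
    fun t => hasDerivAt_const_mul_exp_mul δ (-δ * ε) t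
  have hm : ∀ t, HasDerivAt (fun s => δ * ε ^ 2 * exp (2 * δ * s))
      ((-δ * ε * exp (δ * t)) ^ 2 + δ * (δ * ε ^ 2 * exp (2 * δ * t))) t := by
    intro t
    refine (hasDerivAt_const_mul_exp_mul (2 * δ) (δ * ε ^ 2) t).congr_deriv ?_
    rw [mul_assoc 2 δ t, two_mul (δ * t), exp_add]
    ring
  exact isLogHeatSolution_gaugeShift heq hu (fun p => (hupos p).ne') hc hk hm

/-- the finite transformation generated by
`X₃ = 2e^{δt} ∂x − δ e^{δt} x u ∂u` maps positive solutions of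
`u_t = u_xx + δ u ln u` to positive solutions. -/
theorem symmetry_X3_log_source
    (δ : ℝ) (hδ : δ = 1 ∨ δ = -1)
    (u : ℝ × ℝ → ℝ) (hupos : ∀ p, 0 < u p) (hu : ContDiff ℝ 2 u)
    (heq : ∀ t x : ℝ,
      pdT u t x = deriv (fun y => pdX u t y) x +
        δ * u (t, x) * Real.log (u (t, x))) :
    ∀ ε : ℝ,
      (∀ p : ℝ × ℝ, 0 < u (p.1, p.2 - 2 * ε * Real.exp (δ * p.1)) *
        Real.exp (-δ * ε * Real.exp (δ * p.1) * p.2 +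
          δ * ε ^ 2 * Real.exp (2 * δ * p.1))) ∧
      (∀ t x : ℝ,
        pdT (fun p => u (p.1, p.2 - 2 * ε * Real.exp (δ * p.1)) *
            Real.exp (-δ * ε * Real.exp (δ * p.1) * p.2 +
              δ * ε ^ 2 * Real.exp (2 * δ * p.1))) t x =
          deriv (fun y =>
            pdX (fun p => u (p.1, p.2 - 2 * ε * Real.exp (δ * p.1)) *
              Real.exp (-δ * ε * Real.exp (δ * p.1) * p.2 +
                δ * ε ^ 2 * Real.exp (2 * δ * p.1))) t y) x +
          δ * ((fun p : ℝ × ℝ => u (p.1, p.2 - 2 * ε * Real.exp (δ * p.1)) *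
              Real.exp (-δ * ε * Real.exp (δ * p.1) * p.2 +
                δ * ε ^ 2 * Real.exp (2 * δ * p.1))) (t, x)) *
            Real.log ((fun p : ℝ × ℝ => u (p.1, p.2 - 2 * ε * Real.exp (δ * p.1)) *
              Real.exp (-δ * ε * Real.exp (δ * p.1) * p.2 +
                δ * ε ^ 2 * Real.exp (2 * δ * p.1))) (t, x))) :=
  symmetry_X3_log_source_general δ u hupos hu heq
end
end

section
/- Let C > 0, t₀ > 0, h > 0, τ > 0, i ∈ ℤ, and t ∈ ℝ with t + t₀ > 0. Define the function u(t,x) := C·(t₀/(t+t₀))^{1/2}·exp(−x²/(4(t+t₀))) and the moving mesh x_j(t) := j·h·(t+t₀)/t₀ for j ∈ ℤ. Set H := h(t+t₀)/t₀ (the spatial step at time t, equal for both neighbors), Δx := x_i(t+τ) − x_i(t), U := u(t, x_i(t)), U₊ := u(t, x_{i+1}(t)), U₋ := u(t, x_{i−1}(t)), and Û := u(t+τ, x_i(t+τ)). Then both equations of the invariant difference scheme for the linear heat equation hold exactly: (i) Δx = (2τ/(H+H))·(−ln(U₊/U) + ln(U₋/U)), and (ii) (U/Û)²·exp(−Δx²/(2τ))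 = 1 − (4τ/(H+H))·( (1/H)·ln(U₊/U) + (1/H)·ln(U₋/U) ). -/
noncomputable section

/-- the invariant solution
`u(t,x) = C (t₀/(t+t₀))^{1/2} exp(−x²/(4(t+t₀)))` on the moving mesh
`x_j(t) = j h (t+t₀)/t₀` satisfies both equations of the invariant
difference scheme for the linear heat equation exactly. -/
theorem exact_solution_of_invariant_scheme
    (C t₀ h τ : ℝ) (i : ℤ) (t : ℝ)
    (hC : 0 < C) (ht₀ : 0 < t₀) (hh : 0 < h) (hτ : 0 < τ) (ht : 0 < t + t₀)
    (u : ℝ → ℝ → ℝ)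
    (hu : u = fun s x => C * (t₀ / (s + t₀)) ^ ((1 : ℝ) / 2) *
      Real.exp (-x ^ 2 / (4 * (s + t₀))))
    (X : ℤ → ℝ → ℝ)
    (hX : X = fun (j : ℤ) (s : ℝ) => (j : ℝ) * h * (s + t₀) / t₀)
    (H Δx U Up Um Uh : ℝ)
    (hH : H = h * (t + t₀) / t₀)
    (hΔ : Δx = X i (t + τ) - X i t)
    (hU : U = u t (X i t))
    (hUp : Up = u t (X (i + 1) t))
    (hUm : Um = u t (X (i - 1) t))
    (hUh : Uh = u (t + τ) (X i (t + τ))) :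
    Δx = (2 * τ / (H + H)) * (-Real.log (Up / U) + Real.log (Um / U)) ∧
    (U / Uh) ^ 2 * Real.exp (-Δx ^ 2 / (2 * τ)) =
      1 - (4 * τ / (H + H)) *
        ((1 / H) * Real.log (Up / U) + (1 / H) * Real.log (Um / U)) := by
  subst hu hX
  simp only at hU hUp hUm hUh hΔ
  have ht' : (0:ℝ) < t + τ + t₀ := by linarith
  have hA : t + t₀ ≠ 0 := ne_of_gt ht
  have hA' : t + τ + t₀ ≠ 0 := ne_of_gt ht'
  have ht₀' : t₀ ≠ 0 := ne_of_gt ht₀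
  have hHne : H ≠ 0 := by rw [hH]; positivity
  have hPne : C * (t₀ / (t + t₀)) ^ ((1:ℝ)/2) ≠ 0 := by positivity
  have key : ∀ a b : ℝ,
      (C * (t₀ / (t + t₀)) ^ ((1:ℝ)/2) * Real.exp a) /
      (C * (t₀ / (t + t₀)) ^ ((1:ℝ)/2) * Real.exp b) = Real.exp (a - b) := by
    intro a b
    rw [mul_div_mul_left _ _ hPne, ← Real.exp_sub]
  have hup : Up / U = Real.exp
      (-(((i:ℝ)+1) * h * (t + t₀) / t₀) ^ 2 / (4 * (t + t₀)) -
       -((i:ℝ) * h * (t + t₀) / t₀) ^ 2 / (4 * (t + t₀))) := by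
    rw [hUp, hU]; push_cast; exact key _ _
  have hum : Um / U = Real.exp
      (-(((i:ℝ)-1) * h * (t + t₀) / t₀) ^ 2 / (4 * (t + t₀)) -
       -((i:ℝ) * h * (t + t₀) / t₀) ^ 2 / (4 * (t + t₀))) := by
    rw [hUm, hU]; push_cast; exact key _ _
  have hlogp : Real.log (Up / U) =
      -(((i:ℝ)+1) * h * (t + t₀) / t₀) ^ 2 / (4 * (t + t₀)) -
       -((i:ℝ) * h * (t + t₀) / t₀) ^ 2 / (4 * (t + t₀)) := by
    rw [hup, Real.log_exp]
  have hlogm : Real.log (Um / U) =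
      -(((i:ℝ)-1) * h * (t + t₀) / t₀) ^ 2 / (4 * (t + t₀)) -
       -((i:ℝ) * h * (t + t₀) / t₀) ^ 2 / (4 * (t + t₀)) := by
    rw [hum, Real.log_exp]
  constructor
  · rw [hlogp, hlogm, hΔ, hH]
    field_simp
    ring
  · -- second equation
    have huh : U / Uh = (t₀ / (t + t₀)) ^ ((1:ℝ)/2) / (t₀ / (t + τ + t₀)) ^ ((1:ℝ)/2) *
        Real.exp (-((i:ℝ) * h * (t + t₀) / t₀) ^ 2 / (4 * (t + t₀)) -
          -((i:ℝ) * h * (t + τ + t₀) / t₀) ^ 2 / (4 * (t + τ + t₀))) := by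
      rw [hU, hUh]
      rw [mul_div_mul_comm, mul_div_mul_left _ _ (ne_of_gt hC), ← Real.exp_sub]
    have hratio : (t₀ / (t + t₀)) ^ ((1:ℝ)/2) / (t₀ / (t + τ + t₀)) ^ ((1:ℝ)/2) =
        ((t + τ + t₀) / (t + t₀)) ^ ((1:ℝ)/2) := by
      rw [← Real.div_rpow (by positivity) (by positivity)]
      congr 1
      field_simp
    have hsq : (((t + τ + t₀) / (t + t₀)) ^ ((1:ℝ)/2)) ^ (2:ℕ) =
        (t + τ + t₀) / (t + t₀) := by
      rw [← Real.rpow_natCast (((t + τ + t₀) / (t + t₀)) ^ ((1:ℝ)/2)) 2,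
        ← Real.rpow_mul (by positivity)]
      norm_num
    rw [huh, hratio, mul_pow, hsq, ← Real.exp_nat_mul, mul_assoc, ← Real.exp_add]
    have hE : ((2:ℕ):ℝ) * (-((i:ℝ) * h * (t + t₀) / t₀) ^ 2 / (4 * (t + t₀)) -
          -((i:ℝ) * h * (t + τ + t₀) / t₀) ^ 2 / (4 * (t + τ + t₀))) +
        -Δx ^ 2 / (2 * τ) = 0 := by
      rw [hΔ]
      push_cast
      field_simp
      ring
    rw [hE, Real.exp_zero, hlogp, hlogm, hH]
    field_simp
    ring
end
end
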